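/- Let (X, 𝓕, μ) be a measure space with μ(X) < ∞, Φ an N-function satisfying the Δ₂-condition globally, and φ : X → X an injective nonsingular measurable map that maps measurable sets to measurable sets. If there exists a measurable set F with 0 < μ(F) < ∞ such that limsup_{n→∞} Φ⁻¹(1/μ(φ^{n}(F))) = ∞ (where φ^n(F) is the n-fold forward image), then there exists a measurable set G with 0 < μ(G) < ∞ such that limsup_{n→∞} Φ⁻¹(1/μ(φ^{-n}(G))) = ∞ and limsup_{n→∞} Φ⁻¹(1/μ(φ^{n}(G))) = ∞. -/

import Mathlib

open MeasureTheory Filter Topology Set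
open scoped ENNReal NNReal

noncomputable section

/-- A Young function: an even convex function `Φ : ℝ → [0,∞]` with `Φ 0 = 0` and
`Φ x → ∞` as `x → ∞`. -/
structure IsYoungFunction (Φ : ℝ → ℝ≥0∞) : Prop where
  even : ∀ x : ℝ, Φ (-x) = Φ x
  convex : ∀ x y : ℝ, ∀ a b : ℝ≥0, a + b = 1 →
    Φ ((a : ℝ) * x + (b : ℝ) * y) ≤ (a : ℝ≥0∞) * Φ x + (b : ℝ≥0∞) * Φ y
  map_zero : Φ 0 = 0
  tendsto_atTop : Tendsto Φ atTop (nhds ⊤)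

/-- An N-function: a finite-valued Young function vanishing exactly at `0`, with
`Φ x / x → 0` as `x → 0⁺` and `Φ x / x → ∞` as `x → ∞`. -/
structure IsNFunction (Φ : ℝ → ℝ≥0∞) extends IsYoungFunction Φ : Prop where
  lt_top : ∀ x : ℝ, Φ x < ⊤
  eq_zero_iff : ∀ x : ℝ, Φ x = 0 ↔ x = 0
  tendsto_div_zero : Tendsto (fun x : ℝ => Φ x / ENNReal.ofReal x) (nhdsWithin 0 (Set.Ioi 0)) (nhds 0)
  tendsto_div_atTop : Tendsto (fun x : ℝ => Φ x / ENNReal.ofReal x) atTop (nhds ⊤)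

/-- The Δ₂-condition, globally: `Φ (2 x) ≤ K Φ x` for all `x ≥ 0`, for some `K > 0`. -/
def Delta2Global (Φ : ℝ → ℝ≥0∞) : Prop :=
  ∃ K : ℝ≥0, 0 < K ∧ ∀ x : ℝ, 0 ≤ x → Φ (2 * x) ≤ (K : ℝ≥0∞) * Φ x

/-- The generalized inverse `Φ⁻¹ (y) = inf {x ≥ 0 : Φ x > y}` (with `inf ∅ = ∞`). -/
def youngInv (Φ : ℝ → ℝ≥0∞) (y : ℝ≥0∞) : ℝ≥0∞ :=
  ⨅ (x : ℝ) (_ : 0 ≤ x) (_ : y < Φ x), ENNReal.ofReal x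

/-- The Luxemburg (gauge) norm `N_Φ (f) = inf {k > 0 : ∫ Φ (f / k) dμ ≤ 1}`
(with `inf ∅ = ∞`). -/
def luxNorm {X : Type*} [MeasurableSpace X] (Φ : ℝ → ℝ≥0∞) (μ : Measure X)
    (f : X → ℝ) : ℝ≥0∞ :=
  ⨅ (k : ℝ) (_ : 0 < k) (_ : ∫⁻ x, Φ (f x / k) ∂μ ≤ 1), ENNReal.ofReal k

/-- Membership in the Orlicz space `L^Φ(μ)`: `f` is measurable and
`∫ Φ (k f) dμ < ∞` for some `k > 0`. -/
def MemOrlicz {X : Type*} [MeasurableSpace X] (Φ : ℝ → ℝ≥0∞) (μ : Measure X)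
    (f : X → ℝ) : Prop :=
  Measurable f ∧ ∃ k : ℝ, 0 < k ∧ ∫⁻ x, Φ (k * f x) ∂μ < ⊤

/-- Li-Yorke chaos for the composition operator `C_φ f = f ∘ φ` on `L^Φ(μ)`:
there is an uncountable set `S ⊆ L^Φ(μ)` of pairwise not μ-a.e. equal functions such
that every pair of not μ-a.e. equal members is a Li-Yorke pair for `C_φ`. -/
def CompLiYorkeChaotic {X : Type*} [MeasurableSpace X] (Φ : ℝ → ℝ≥0∞) (μ : Measure X)
    (φ : X → X) : Prop :=
  ∃ S : Set (X → ℝ), ¬ S.Countable ∧ (∀ f ∈ S, MemOrlicz Φ μ f) ∧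
    (∀ f ∈ S, ∀ g ∈ S, f ≠ g → ¬ f =ᵐ[μ] g) ∧
    ∀ f ∈ S, ∀ g ∈ S, ¬ f =ᵐ[μ] g →
      atTop.liminf (fun n : ℕ => luxNorm Φ μ ((f - g) ∘ φ^[n])) = 0 ∧
      0 < atTop.limsup (fun n : ℕ => luxNorm Φ μ ((f - g) ∘ φ^[n]))

-- monotonicity of an N-function on [0, ∞)
lemma IsNFunction.mono {Φ : ℝ → ℝ≥0∞} (hΦ : IsNFunction Φ) {x y : ℝ}
    (hx : 0 ≤ x) (hxy : x ≤ y) : Φ x ≤ Φ y := by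
  rcases eq_or_lt_of_le hxy with rfl | hlt
  · exact le_rfl
  · have hy : 0 < y := lt_of_le_of_lt hx hlt
    set a : ℝ≥0 := Real.toNNReal (x / y) with ha
    have hcoe : (a : ℝ) = x / y := Real.coe_toNNReal _ (div_nonneg hx hy.le)
    have ha1 : a ≤ 1 := by
      rw [← NNReal.coe_le_coe, hcoe, NNReal.coe_one]
      exact div_le_one_of_le₀ hxy hy.le
    have hab : a + (1 - a) = 1 := add_tsub_cancel_of_le ha1
    have hconv := hΦ.convex y 0 a (1 - a) hab
    rw [mul_zero, add_zero, hcoe, div_mul_cancel₀ x hy.ne', hΦ.map_zero, mul_zero,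
      add_zero] at hconv
    refine hconv.trans ?_
    calc (a : ℝ≥0∞) * Φ y ≤ 1 * Φ y := by
          gcongr
          exact_mod_cast ha1
    _ = Φ y := one_mul _

lemma youngInv_ge {Φ : ℝ → ℝ≥0∞} (hΦ : IsNFunction Φ) {R : ℝ} (hR : 0 ≤ R) {y : ℝ≥0∞}
    (h : Φ R < y) : ENNReal.ofReal R ≤ youngInv Φ y := by
  refine le_iInf fun x => le_iInf fun hx => le_iInf fun hxy => ENNReal.ofReal_le_ofReal ?_
  by_contra hc
  push_neg at hc
  exact lt_irrefl y ((hxy.trans_le (hΦ.mono hx hc.le)).trans h)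

/-- If along times `t i → ∞` the measures `μ (A (t i))` tend to `0`, then
`limsup_n Φ⁻¹(1/μ(A n)) = ⊤`. -/
lemma limsup_youngInv_top {X : Type*} [MeasurableSpace X] (μ : Measure X)
    {Φ : ℝ → ℝ≥0∞} (hΦ : IsNFunction Φ) (A : ℕ → Set X) (t : ℕ → ℕ)
    (ht : Tendsto t atTop atTop)
    (h0 : Tendsto (fun i => μ (A (t i))) atTop (𝓝 0)) :
    atTop.limsup (fun n => youngInv Φ (1 / μ (A n))) = ⊤ := by
  by_contra h
  obtain ⟨r, hr⟩ := ENNReal.exists_nat_gt h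
  have hΦr : Φ (r : ℝ) ≠ ⊤ := (hΦ.lt_top _).ne
  have hpos : (0 : ℝ≥0∞) < (Φ (r : ℝ) + 1)⁻¹ := by
    simp only [ENNReal.inv_pos]
    exact ENNReal.add_ne_top.2 ⟨hΦr, ENNReal.one_ne_top⟩
  have key : ∀ i, μ (A (t i)) < (Φ (r : ℝ) + 1)⁻¹ →
      ((r : ℕ) : ℝ≥0∞) ≤ youngInv Φ (1 / μ (A (t i))) := by
    intro i hi
    have hΦlt : Φ (r : ℝ) < 1 / μ (A (t i)) := by
      rcases eq_or_ne (μ (A (t i))) 0 with h0' | h0'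
      · rw [h0', ENNReal.div_zero one_ne_zero]
        exact hΦ.lt_top _
      · have h1 : Φ (r : ℝ) + 1 < (μ (A (t i)))⁻¹ := ENNReal.lt_inv_iff_lt_inv.1 hi
        rw [one_div]
        exact (ENNReal.lt_add_right hΦr one_ne_zero).trans h1
    have := youngInv_ge hΦ (Nat.cast_nonneg r) hΦlt
    rwa [ENNReal.ofReal_natCast] at this
  have hfreq : ∃ᶠ n in atTop, ((r : ℕ) : ℝ≥0∞) ≤ youngInv Φ (1 / μ (A n)) :=
    ht.frequently (((h0.eventually_lt_const hpos).mono key).frequently)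
  have hle : ((r : ℕ) : ℝ≥0∞) ≤ atTop.limsup (fun n => youngInv Φ (1 / μ (A n))) :=
    le_limsup_of_frequently_le hfreq
  exact absurd hle (not_le.2 hr)

/-- From `limsup_n Φ⁻¹(1/μ(A n)) = ⊤`, the measures `μ (A n)` are frequently small. -/
lemma exists_small_of_limsup_top {X : Type*} [MeasurableSpace X] (μ : Measure X)
    {Φ : ℝ → ℝ≥0∞} (hΦ : IsNFunction Φ) (A : ℕ → Set X)
    (h : atTop.limsup (fun n => youngInv Φ (1 / μ (A n))) = ⊤)
    {ε : ℝ≥0∞} (hε : ε ≠ 0) (N : ℕ) : ∃ n, N ≤ n ∧ μ (A n) < ε := by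
  have hεi : ε⁻¹ < ⊤ := by
    simp only [ENNReal.inv_lt_top]
    exact pos_iff_ne_zero.2 hε
  obtain ⟨x₀, hx₀t, hx₀0⟩ : ∃ x : ℝ, ε⁻¹ < Φ x ∧ 0 ≤ x := by
    have h1 : ∀ᶠ x in atTop, ε⁻¹ < Φ x := hΦ.tendsto_atTop.eventually_const_lt hεi
    exact (h1.and (eventually_ge_atTop (0 : ℝ))).exists
  have hfreq : ∃ᶠ n in atTop, ENNReal.ofReal x₀ < youngInv Φ (1 / μ (A n)) := by
    refine frequently_lt_of_lt_limsup (by isBoundedDefault) ?_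
    rw [h]
    exact ENNReal.ofReal_lt_top
  have hfreq2 : ∃ᶠ n in atTop, μ (A n) < ε := by
    refine hfreq.mono fun n hn => ?_
    by_contra hc
    push_neg at hc
    have h2 : 1 / μ (A n) ≤ ε⁻¹ := by
      rw [one_div]
      exact ENNReal.inv_le_inv' hc
    have h3 : youngInv Φ (1 / μ (A n)) ≤ ENNReal.ofReal x₀ :=
      iInf_le_of_le x₀ (iInf_le_of_le hx₀0 (iInf_le_of_le (h2.trans_lt hx₀t) le_rfl))
    exact absurd h3 (not_le.2 hn)
  exact frequently_atTop.1 hfreq2 N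

/-- Implication (4) ⇒ (5) (for finite measure, `Φ ∈ Δ₂`, injective `φ`): if there is a
measurable set `F` with `0 < μ F < ∞` such that `limsup_n Φ⁻¹(1/μ(φ^{n}(F))) = ∞`, then there
is a measurable set `G` with `0 < μ G < ∞` such that both
`limsup_n Φ⁻¹(1/μ(φ^{-n}(G))) = ∞` and `limsup_n Φ⁻¹(1/μ(φ^{n}(G))) = ∞`. -/
theorem exists_set_both_limsup_top
    {X : Type*} [MeasurableSpace X] (μ : Measure X) [IsFiniteMeasure μ]
    (Φ : ℝ → ℝ≥0∞) (hΦ : IsNFunction Φ) (hΔ : Delta2Global Φ)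
    (φ : X → X) (hφ : Measurable φ) (hinj : Function.Injective φ)
    (himg : ∀ F : Set X, MeasurableSet F → MeasurableSet (φ '' F))
    (hns : ∀ F : Set X, MeasurableSet F → μ F = 0 → μ (φ ⁻¹' F) = 0)
    (F : Set X) (hF : MeasurableSet F) (hF0 : 0 < μ F) (hF1 : μ F < ⊤)
    (hfwd : atTop.limsup (fun n : ℕ => youngInv Φ (1 / μ (φ^[n] '' F))) = ⊤) :
    ∃ G : Set X, MeasurableSet G ∧ 0 < μ G ∧ μ G < ⊤ ∧
      atTop.limsup (fun n : ℕ => youngInv Φ (1 / μ (φ^[n] ⁻¹' G))) = ⊤ ∧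
      atTop.limsup (fun n : ℕ => youngInv Φ (1 / μ (φ^[n] '' G))) = ⊤ := by
  classical
  -- iterates: basic facts
  have hmeasit : ∀ u : ℕ, Measurable (φ^[u]) := fun u => hφ.iterate u
  have himgit : ∀ (u : ℕ) (A : Set X), MeasurableSet A → MeasurableSet (φ^[u] '' A) := by
    intro u
    induction u with
    | zero => intro A hA; simpa using hA
    | succ n ih =>
      intro A hA
      have h1 : φ^[n + 1] '' A = φ '' (φ^[n] '' A) := by
        rw [Function.iterate_succ', Set.image_comp]
      rw [h1]
      exact himg _ (ih A hA)
  have hnsit : ∀ (u : ℕ) (N : Set X), MeasurableSet N → μ N = 0 → μ (φ^[u] ⁻¹' N) = 0 := by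
    intro u
    induction u with
    | zero => intro N _ h; simpa using h
    | succ n ih =>
      intro N hN h
      have h2 : (φ^[n + 1]) ⁻¹' N = φ ⁻¹' (φ^[n] ⁻¹' N) := by
        rw [Function.iterate_succ]
        rfl
      rw [h2]
      exact hns _ ((hmeasit n) hN) (ih N hN h)
  -- the images of F
  set img : ℕ → Set X := fun u => φ^[u] '' F with himgdef
  have hMimg : ∀ u, MeasurableSet (img u) := fun u => himgit u F hF
  have himgadd : ∀ a b : ℕ, a ≤ b → φ^[a] '' img (b - a) = img b := by
    intro a b hab
    simp only [himgdef, ← Set.image_comp, ← Function.iterate_add]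
    rw [Nat.add_sub_cancel' hab]
  -- Step 1: extract a sequence of times with summably small images
  have hSmall : ∀ (ε : ℝ≥0∞), ε ≠ 0 → ∀ N : ℕ, ∃ n, N ≤ n ∧ μ (img n) < ε := fun ε hε N =>
    exists_small_of_limsup_top μ hΦ img hfwd hε N
  have hhalf_ne : ((2 : ℝ≥0∞)⁻¹) ≠ 0 := ENNReal.inv_ne_zero.2 ENNReal.ofNat_ne_top
  obtain ⟨m, hmmono, hm2⟩ :
      ∃ m : ℕ → ℕ, StrictMono m ∧ ∀ k, μ (img (m k)) < 2⁻¹ ^ k := by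
    have hex : ∀ (k N : ℕ), ∃ n, N ≤ n ∧ μ (img n) < 2⁻¹ ^ k := fun k N =>
      hSmall (2⁻¹ ^ k) (pow_ne_zero k hhalf_ne) N
    choose f hf1 hf2 using hex
    refine ⟨fun k => Nat.rec (f 0 0) (fun k ih => f (k + 1) (ih + 1)) k, ?_, ?_⟩
    · apply strictMono_nat_of_lt_succ
      intro k
      exact lt_of_lt_of_le (Nat.lt_succ_self _) (hf1 (k + 1) _)
    · intro k
      cases k with
      | zero => exact hf2 0 0
      | succ k => exact hf2 (k + 1) _
  have hmk : ∀ k, k ≤ m k := fun k => hmmono.le_apply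
  -- Step 2 (key lemma): for each fixed τ, μ (F ∩ img (m k - τ)) → 0
  have hLemA : ∀ τ : ℕ, Tendsto (fun k => μ (F ∩ img (m k - τ))) atTop (𝓝 0) := by
    intro τ
    set U : ℕ → Set X := fun j => F ∩ ⋃ (k : ℕ) (_ : j ≤ k), img (m k - τ) with hUdef
    have hUmeas : ∀ j, MeasurableSet (U j) := fun j =>
      hF.inter (MeasurableSet.iUnion fun k => MeasurableSet.iUnion fun _ => hMimg _)
    have hUanti : Antitone U := by
      intro j j' hjj'
      refine Set.inter_subset_inter_right _ ?_
      refine Set.iUnion₂_subset fun k hk => Set.subset_iUnion₂ (s := fun k _ => img (m k - τ)) k (hjj'.trans hk)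
    have hEnull : μ (⋂ j, U j) = 0 := by
      set E := ⋂ j, U j with hEdef
      have hEmeas : MeasurableSet E := MeasurableSet.iInter fun j => hUmeas j
      have hEimgmeas : MeasurableSet (φ^[τ] '' E) := himgit τ E hEmeas
      have himgE : ∀ j, τ ≤ j → μ (φ^[τ] '' E) ≤ 2⁻¹ ^ j * 2 := by
        intro j hj
        have hsub : φ^[τ] '' E ⊆ ⋃ d : ℕ, img (m (j + d)) := by
          rintro y ⟨x, hxE, rfl⟩
          have hxU : x ∈ U j := Set.mem_iInter.1 hxE j
          obtain ⟨k, hk, hximg⟩ := Set.mem_iUnion₂.1 hxU.2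
          refine Set.mem_iUnion.2 ⟨k - j, ?_⟩
          rw [Nat.add_sub_cancel' hk]
          have hτm : τ ≤ m k := hj.trans (hk.trans (hmk k))
          rw [← himgadd τ (m k) hτm]
          exact Set.mem_image_of_mem _ hximg
        have hb1 : μ (φ^[τ] '' E) ≤ ∑' d : ℕ, μ (img (m (j + d))) :=
          (measure_mono hsub).trans (measure_iUnion_le _)
        have hb2 : ∑' d : ℕ, μ (img (m (j + d))) ≤ ∑' d : ℕ, (2⁻¹ : ℝ≥0∞) ^ (j + d) :=
          ENNReal.tsum_le_tsum fun d => (hm2 _).le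
        have hb3 : ∑' d : ℕ, (2⁻¹ : ℝ≥0∞) ^ (j + d) = 2⁻¹ ^ j * 2 := by
          simp_rw [pow_add]
          rw [ENNReal.tsum_mul_left, ENNReal.tsum_geometric, ENNReal.one_sub_inv_two, inv_inv]
        exact hb1.trans (hb2.trans_eq hb3)
      have h0 : μ (φ^[τ] '' E) = 0 := by
        by_contra hc
        have hpos : 0 < μ (φ^[τ] '' E) := pos_iff_ne_zero.2 hc
        have htend : Tendsto (fun j : ℕ => (2⁻¹ : ℝ≥0∞) ^ j * 2) atTop (𝓝 0) := by
          have h1 := ENNReal.tendsto_pow_atTop_nhds_zero_of_lt_one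
            (by simp [ENNReal.inv_lt_one, ENNReal.one_lt_two] : (2⁻¹ : ℝ≥0∞) < 1)
          have h2 := ENNReal.Tendsto.mul_const h1 (Or.inr (ENNReal.ofNat_ne_top : (2 : ℝ≥0∞) ≠ ⊤))
          simpa using h2
        obtain ⟨j, hj1, hj2⟩ := ((htend.eventually_lt_const hpos).and (eventually_ge_atTop τ)).exists
        exact absurd (himgE j hj2) (not_le.2 hj1)
      have hpre : μ (φ^[τ] ⁻¹' (φ^[τ] '' E)) = 0 := hnsit τ _ hEimgmeas h0
      exact le_antisymm ((measure_mono (Set.subset_preimage_image _ _)).trans hpre.le) (zero_le)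
    have hUten : Tendsto (fun j => μ (U j)) atTop (𝓝 0) := by
      have h1 := tendsto_measure_iInter_atTop (μ := μ)
        (fun j => (hUmeas j).nullMeasurableSet) hUanti ⟨0, measure_ne_top μ _⟩
      rw [hEnull] at h1
      exact h1
    refine tendsto_of_tendsto_of_tendsto_of_le_of_le tendsto_const_nhds hUten
      (fun k => zero_le) (fun k => ?_)
    refine measure_mono (Set.inter_subset_inter_right _ ?_)
    exact Set.subset_iUnion₂ (s := fun k' _ => img (m k' - τ)) k le_rfl
  -- Step 3: choose the sequence c for the construction of G
  have hμF : μ F ≠ 0 := hF0.ne'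
  have hμFtop : μ F ≠ ⊤ := hF1.ne
  have hCP : ∀ (i N : ℕ), ∃ c', N ≤ c' ∧ i + 2 ≤ c' ∧
      ∑ s ∈ Finset.range (i + 1), μ (F ∩ img (c' - s)) < 2⁻¹ ^ (i + 2) * μ F := by
    intro i N
    have hsum : Tendsto (fun k => ∑ s ∈ Finset.range (i + 1), μ (F ∩ img (m k - s)))
        atTop (𝓝 0) := by
      have h1 := tendsto_finset_sum (Finset.range (i + 1))
        (fun s _ => hLemA s)
      simpa using h1
    have hbpos : (0 : ℝ≥0∞) < 2⁻¹ ^ (i + 2) * μ F :=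
      pos_iff_ne_zero.2 (mul_ne_zero (pow_ne_zero _ hhalf_ne) hμF)
    obtain ⟨k, hk1, hk2⟩ :=
      ((hsum.eventually_lt_const hbpos).and (eventually_ge_atTop (max N (i + 2)))).exists
    refine ⟨m k, le_trans (le_max_left _ _) (hk2.trans (hmk k)), le_trans (le_max_right _ _) (hk2.trans (hmk k)), hk1⟩
  choose g hg1 hg2 hg3 using hCP
  set c : ℕ → ℕ := fun i => Nat.rec (g 0 0) (fun i ih => g (i + 1) (ih + 1)) i with hcdef
  have hcsucc : ∀ i, c (i + 1) = g (i + 1) (c i + 1) := fun i => rfl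
  have hcmono : StrictMono c := by
    apply strictMono_nat_of_lt_succ
    intro i
    rw [hcsucc]
    exact lt_of_lt_of_le (Nat.lt_succ_self _) (hg1 (i + 1) _)
  have hc2 : ∀ i, i + 2 ≤ c i := by
    intro i
    cases i with
    | zero => exact hg2 0 0
    | succ i => rw [hcsucc]; exact hg2 (i + 1) _
  have hc3 : ∀ i, ∑ s ∈ Finset.range (i + 1), μ (F ∩ img (c i - s)) < 2⁻¹ ^ (i + 2) * μ F := by
    intro i
    cases i with
    | zero => exact hg3 0 0
    | succ i => rw [hcsucc]; exact hg3 (i + 1) _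
  have hci : ∀ i, i ≤ c i := fun i => (Nat.le_add_right i 2).trans (hc2 i)
  have hcten : Tendsto c atTop atTop := tendsto_atTop_mono hci tendsto_id
  -- Step 4: definition of G
  set bigU : Set X := ⋃ (i : ℕ), ⋃ s ∈ Finset.range (i + 1), img (c i - s) with hbigUdef
  have hbigUmeas : MeasurableSet bigU :=
    MeasurableSet.iUnion fun i => (Finset.range (i + 1)).measurableSet_biUnion fun s _ => hMimg _
  set G : Set X := F \ bigU with hGdef
  have hGmeas : MeasurableSet G := hF.diff hbigUmeas
  have hGsub : G ⊆ F := Set.diff_subset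
  have hGfin : μ G < ⊤ := lt_of_le_of_lt (measure_mono hGsub) hF1
  -- μ G > 0
  have hGpos : 0 < μ G := by
    have hsplit : μ (F ∩ bigU) + μ (F \ bigU) = μ F := measure_inter_add_diff F hbigUmeas
    have hle : μ (F ∩ bigU) ≤ 2⁻¹ * μ F := by
      have h1 : F ∩ bigU = ⋃ i : ℕ, (F ∩ ⋃ s ∈ Finset.range (i + 1), img (c i - s)) := by
        rw [hbigUdef, Set.inter_iUnion]
      have h2 : ∀ i : ℕ, μ (F ∩ ⋃ s ∈ Finset.range (i + 1), img (c i - s)) ≤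
          2⁻¹ ^ (i + 2) * μ F := by
        intro i
        refine le_trans ?_ (hc3 i).le
        rw [Set.inter_iUnion₂]
        exact measure_biUnion_finset_le _ _
      calc μ (F ∩ bigU) ≤ ∑' i : ℕ, μ (F ∩ ⋃ s ∈ Finset.range (i + 1), img (c i - s)) := by
            rw [h1]; exact measure_iUnion_le _
      _ ≤ ∑' i : ℕ, 2⁻¹ ^ (i + 2) * μ F := ENNReal.tsum_le_tsum h2
      _ = (∑' i : ℕ, (2⁻¹ : ℝ≥0∞) ^ (i + 2)) * μ F := ENNReal.tsum_mul_right
      _ = 2⁻¹ * μ F := by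
          congr 1
          simp_rw [pow_add]
          rw [ENNReal.tsum_mul_right, ENNReal.tsum_geometric, ENNReal.one_sub_inv_two, inv_inv]
          rw [pow_two, mul_comm (2 : ℝ≥0∞), mul_assoc,
            ENNReal.inv_mul_cancel (by norm_num : (2:ℝ≥0∞) ≠ 0) ENNReal.ofNat_ne_top, mul_one]
    rw [pos_iff_ne_zero]
    intro hG0
    have hFeq : μ F ≤ 2⁻¹ * μ F := by
      calc μ F = μ (F ∩ bigU) + μ (F \ bigU) := hsplit.symm
      _ = μ (F ∩ bigU) := by rw [← hGdef, hG0, add_zero]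
      _ ≤ 2⁻¹ * μ F := hle
    have hhalf : 2⁻¹ * μ F < μ F := by
      have := ENNReal.half_lt_self hμF hμFtop
      rwa [ENNReal.div_eq_inv_mul] at this
    exact absurd hFeq (not_le.2 hhalf)
  -- Step 5: backward estimate
  set V : ℕ → Set X := fun i =>
    (⋃ s : ℕ, φ^[s] ⁻¹' F) \ ⋃ s ∈ Finset.range (i + 1), φ^[s] ⁻¹' F with hVdef
  have hVmeas : ∀ i, MeasurableSet (V i) :=
    fun i => (MeasurableSet.iUnion fun s => (hmeasit s) hF).diff
      ((Finset.range (i + 1)).measurableSet_biUnion fun s _ => (hmeasit s) hF)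
  have hVanti : Antitone V := by
    intro i i' hii'
    refine Set.diff_subset_diff_right ?_
    refine Set.iUnion₂_subset fun s hs => Set.subset_iUnion₂ (s := fun s _ => φ^[s] ⁻¹' F) s ?_
    exact Finset.mem_range.2 (lt_of_lt_of_le (Finset.mem_range.1 hs) (by omega))
  have hVempty : ⋂ i, V i = ∅ := by
    ext x
    simp only [Set.mem_iInter, Set.mem_empty_iff_false, iff_false]
    intro hall
    obtain ⟨s₀, hs₀⟩ := Set.mem_iUnion.1 (hall 0).1
    exact (hall s₀).2 (Set.mem_biUnion (Finset.mem_range.2 (Nat.lt_succ_self s₀)) hs₀)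
  have hVten : Tendsto (fun i => μ (V i)) atTop (𝓝 0) := by
    have h1 := tendsto_measure_iInter_atTop (μ := μ)
      (fun i => (hVmeas i).nullMeasurableSet) hVanti ⟨0, measure_ne_top μ _⟩
    rw [hVempty, measure_empty] at h1
    exact h1
  have hback : ∀ i, (φ^[c i]) ⁻¹' G ⊆ V i := by
    intro i x hx
    have hx' : φ^[c i] x ∈ G := hx
    rw [hGdef, Set.mem_diff] at hx'
    constructor
    · exact Set.mem_iUnion.2 ⟨c i, hx'.1⟩
    · intro hmem
      rw [Set.mem_iUnion₂] at hmem
      obtain ⟨s, hs, hxs⟩ := hmem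
      have hsi : s ≤ i := Nat.lt_succ_iff.1 (Finset.mem_range.1 hs)
      have hsc : s ≤ c i := hsi.trans (hci i)
      have hximg : φ^[c i] x ∈ img (c i - s) := by
        have hiter : φ^[c i - s + s] x = φ^[c i - s] (φ^[s] x) :=
          Function.iterate_add_apply φ (c i - s) s x
        rw [Nat.sub_add_cancel hsc] at hiter
        rw [hiter]
        exact Set.mem_image_of_mem _ hxs
      refine hx'.2 ?_
      rw [hbigUdef]
      exact Set.mem_iUnion.2 ⟨i, Set.mem_biUnion hs hximg⟩
  have hbackten : Tendsto (fun i => μ ((φ^[c i]) ⁻¹' G)) atTop (𝓝 0) :=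
    tendsto_of_tendsto_of_tendsto_of_le_of_le tendsto_const_nhds hVten
      (fun i => zero_le) (fun i => measure_mono (hback i))
  have hbacktop : atTop.limsup (fun n : ℕ => youngInv Φ (1 / μ (φ^[n] ⁻¹' G))) = ⊤ :=
    limsup_youngInv_top μ hΦ (fun n => φ^[n] ⁻¹' G) c hcten hbackten
  -- Step 6: forward estimate
  have hforten : Tendsto (fun k => μ (φ^[m k] '' G)) atTop (𝓝 0) := by
    have htend2 : Tendsto (fun k : ℕ => (2⁻¹ : ℝ≥0∞) ^ k) atTop (𝓝 0) :=
      ENNReal.tendsto_pow_atTop_nhds_zero_of_lt_one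
        (by simp [ENNReal.inv_lt_one, ENNReal.one_lt_two])
    refine tendsto_of_tendsto_of_tendsto_of_le_of_le tendsto_const_nhds htend2
      (fun k => zero_le) (fun k => ?_)
    exact le_trans (measure_mono (Set.image_mono hGsub)) (hm2 k).le
  have hfortop : atTop.limsup (fun n : ℕ => youngInv Φ (1 / μ (φ^[n] '' G))) = ⊤ :=
    limsup_youngInv_top μ hΦ (fun n => φ^[n] '' G) m
      (tendsto_atTop_mono hmk tendsto_id) hforten
  exact ⟨G, hGmeas, hGpos, hGfin, hbacktop, hfortop⟩
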